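/- arXiv:2201.08814 — 5 statements merged into one kernel-verified Lean document; each statement's English description precedes it below -/
import Mathlib

section
/- Let G be a finite directed graph whose edge orientation is acyclic and which contains no directed path with k edges. Then the underlying undirected graph of G is k-colourable (properly, i.e., its chromatic number is at most k). -/
/-!
Colour each vertex `v` by the number of edges of a longest directed path starting at `v`.
For an edge `u → v`, putting `u` in front of a longest path from `v` gives a longer path
from `u`, so the endpoints of every edge get different colours. Acyclicity makes every
directed walk a path, so no walk has `k` edges and the colours lie in `{0, …, k - 1}`.
-/

/-- The underlying undirected simple graph of a directed graph given by a relation `A`. -/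
def underlyingGraph {V : Type*} (A : V → V → Prop) : SimpleGraph V where
  Adj u v := u ≠ v ∧ (A u v ∨ A v u)
  symm := ⟨fun u v h => ⟨h.1.symm, h.2.symm⟩⟩
  loopless := ⟨fun v h => h.1 rfl⟩

section

open List Relation

variable {V : Type*} {A : V → V → Prop}

theorem List.IsChain.nodup_of_irrefl_transGen (hacyc : ∀ v, ¬TransGen A v v) {l : List V}
    (hl : l.IsChain A) : l.Nodup :=
  (isChain_iff_pairwise.mp (hl.imp fun _ _ => TransGen.single)).imp
    fun {a b} (h : TransGen A a b) (heq : a = b) => hacyc b (heq ▸ h)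

theorem List.IsChain.length_le_of_irrefl_transGen (hacyc : ∀ v, ¬TransGen A v v) {k : ℕ}
    (hnopath : ¬∃ l : List V, l.IsChain A ∧ l.Nodup ∧ l.length = k + 1) {l : List V}
    (hl : l.IsChain A) : l.length ≤ k := by
  by_contra! hlen
  refine hnopath ⟨l.take (k + 1), hl.take _, (hl.take _).nodup_of_irrefl_transGen hacyc, ?_⟩
  simp only [length_take]
  omega

section chainRank

variable (A) in
noncomputable def chainRank (k : ℕ) (v : V) : ℕ :=
  open Classical in
  Nat.findGreatest (fun n => ∃ l : List V, l.IsChain A ∧ l.head? = some v ∧ l.length = n + 1) k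

variable {k : ℕ}

theorem exists_isChain_length_chainRank (v : V) :
    ∃ l : List V, l.IsChain A ∧ l.head? = some v ∧ l.length = chainRank A k v + 1 := by
  classical
  exact Nat.findGreatest_spec (P := fun n => ∃ l : List V, l.IsChain A ∧ l.head? = some v ∧
    l.length = n + 1) (Nat.zero_le k) ⟨[v], isChain_singleton v, rfl, rfl⟩

variable (hbound : ∀ l : List V, l.IsChain A → l.length ≤ k)
include hbound

theorem chainRank_lt (v : V) : chainRank A k v < k := by
  obtain ⟨l, hl, -, hlen⟩ := exists_isChain_length_chainRank (A := A) (k := k) v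
  have := hbound l hl
  omega

theorem chainRank_lt_chainRank {u v : V} (huv : A u v) : chainRank A k v < chainRank A k u := by
  obtain ⟨l, hl, hhead, hlen⟩ := exists_isChain_length_chainRank (A := A) (k := k) v
  have hchain : (u :: l).IsChain A :=
    hl.cons fun w hw => by rw [hhead, Option.mem_some_iff] at hw; exact hw ▸ huv
  have hlen' : (u :: l).length = chainRank A k v + 1 + 1 := by rw [length_cons, hlen]
  classical
  refine Nat.lt_of_succ_le (Nat.le_findGreatest ?_ ⟨u :: l, hchain, rfl, hlen'⟩)
  have := hbound _ hchain
  omega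

end chainRank

theorem colorable_underlyingGraph_of_ne {k : ℕ} (c : V → Fin k)
    (hc : ∀ u v, A u v → c u ≠ c v) : (underlyingGraph A).Colorable k :=
  ⟨.mk c fun huv => huv.2.elim (hc _ _) fun h => (hc _ _ h).symm⟩

end

theorem stmt0_general {V : Type*} (A : V → V → Prop)
    (hacyc : ∀ v : V, ¬ Relation.TransGen A v v) (k : ℕ)
    (hnopath : ¬ ∃ l : List V, l.Chain' A ∧ l.Nodup ∧ l.length = k + 1) :
    (underlyingGraph A).Colorable k := by
  have hbound (l : List V) (hl : l.IsChain A) : l.length ≤ k :=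
    hl.length_le_of_irrefl_transGen hacyc hnopath
  exact colorable_underlyingGraph_of_ne (fun v => ⟨chainRank A k v, chainRank_lt hbound v⟩)
    fun u v huv heq => (chainRank_lt_chainRank hbound huv).ne' (congrArg Fin.val heq)

/-- A directed graph with an acyclic orientation and no directed path with `k` edges
has `k`-colourable underlying undirected graph. -/
theorem stmt0 {V : Type*} [Fintype V] (A : V → V → Prop)
    (hacyc : ∀ v : V, ¬ Relation.TransGen A v v) (k : ℕ)
    (hnopath : ¬ ∃ l : List V, l.Chain' A ∧ l.Nodup ∧ l.length = k + 1) :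
    (underlyingGraph A).Colorable k :=
  stmt0_general A hacyc k hnopath
end

section
/- Let p be prime and n an integer with 1 ≤ n ≤ p-1. Then there is a partition of {1,...,p-1} into at most n(n+1)/2 sets A_1, ..., A_t such that for every i and every m with 1 ≤ m ≤ n, no m (not necessarily distinct) elements of A_i have sum divisible by p. -/
/-!
Let `F` be the fractions `a/b` with `0 ≤ a < b ≤ n`, at most `n(n+1)/2` of them, and put `x` into
the class of the largest element of `F` below `x/p`. Suppose `m ≤ n` elements `x_j` of the class
of `c` have sum `kp`. The numbers `x_j/p` have mean `k/m` and, `p` being prime, none equals it. So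
some `x_j/p` exceeds `k/m`, which gives `k/m ∈ F` and hence `k/m ≤ c`; but another `x_j/p` is at
most `k/m`, contradicting `c < x_j/p`.
-/

open Finset

noncomputable def fareySet (n : ℕ) : Finset ℚ :=
  (range (n + 1)).biUnion fun b => (range b).image fun a : ℕ => (a : ℚ) / b

lemma card_fareySet_le (n : ℕ) : #(fareySet n) ≤ n * (n + 1) / 2 :=
  calc #(fareySet n)
      ≤ ∑ b ∈ range (n + 1), #((range b).image fun a : ℕ => (a : ℚ) / b) := card_biUnion_le
    _ ≤ ∑ b ∈ range (n + 1), b :=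
        sum_le_sum fun b _ => card_image_le.trans_eq (card_range b)
    _ = n * (n + 1) / 2 := by rw [sum_range_id, Nat.add_sub_cancel, mul_comm]

lemma div_mem_fareySet {n a b : ℕ} (hab : a < b) (hbn : b ≤ n) : (a : ℚ) / b ∈ fareySet n :=
  mem_biUnion.2 ⟨b, mem_range.2 (Nat.lt_succ_of_le hbn), mem_image_of_mem _ (mem_range.2 hab)⟩

/-- Junk value `0` when no element of `fareySet n` lies below `q`. -/
noncomputable def fareyPred (n : ℕ) (q : ℚ) : ℚ :=
  if h : ((fareySet n).filter (· < q)).Nonempty then ((fareySet n).filter (· < q)).max' h else 0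

section fareyPred

variable {n : ℕ} {q : ℚ}

lemma fareyPred_mem_filter (hn : 1 ≤ n) (hq : 0 < q) :
    fareyPred n q ∈ (fareySet n).filter (· < q) := by
  have hne : ((fareySet n).filter (· < q)).Nonempty :=
    ⟨0, mem_filter.2 ⟨by simpa using div_mem_fareySet (a := 0) one_pos hn, hq⟩⟩
  rw [fareyPred, dif_pos hne]
  exact max'_mem _ hne

lemma fareyPred_mem (hn : 1 ≤ n) (hq : 0 < q) : fareyPred n q ∈ fareySet n :=
  (mem_filter.1 (fareyPred_mem_filter hn hq)).1

lemma fareyPred_lt (hn : 1 ≤ n) (hq : 0 < q) : fareyPred n q < q :=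
  (mem_filter.1 (fareyPred_mem_filter hn hq)).2

lemma le_fareyPred {r : ℚ} (hr : r ∈ fareySet n) (hrq : r < q) : r ≤ fareyPred n q := by
  have hmem : r ∈ (fareySet n).filter (· < q) := mem_filter.2 ⟨hr, hrq⟩
  rw [fareyPred, dif_pos ⟨r, hmem⟩]
  exact le_max' _ _ hmem

end fareyPred

lemma exists_eq_mean_of_fareyPred_eq {n m : ℕ} (hn : 1 ≤ n) (hm : 1 ≤ m) (hmn : m ≤ n)
    {q : Fin m → ℚ} (hq0 : ∀ j, 0 < q j) (hq1 : ∀ j, q j < 1) {c : ℚ}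
    (hc : ∀ j, fareyPred n (q j) = c) {k : ℕ} (hsum : ∑ j, q j = k) :
    ∃ j, q j = k / m := by
  by_contra! hne
  have hm0 : (m : ℚ) ≠ 0 := by positivity
  have hsum_const : ∑ _j : Fin m, ((k : ℚ) / m) = ∑ j, q j := by
    rw [sum_const, card_univ, Fintype.card_fin, nsmul_eq_mul, hsum, mul_div_cancel₀ _ hm0]
  have huniv : (univ : Finset (Fin m)).Nonempty := univ_nonempty_iff.2 ⟨⟨0, hm⟩⟩
  obtain ⟨j₀, -, hj₀⟩ := exists_le_of_sum_le huniv hsum_const.le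
  obtain ⟨j₁, -, hj₁⟩ := exists_le_of_sum_le huniv hsum_const.ge
  have hlt : (k : ℚ) / m < q j₀ := lt_of_le_of_ne hj₀ (hne j₀).symm
  have hkm : k < m := by
    have : (k : ℚ) / m < 1 := hlt.trans (hq1 j₀)
    rw [div_lt_one (by positivity)] at this
    exact_mod_cast this
  have hmean : (k : ℚ) / m ≤ c := hc j₀ ▸ le_fareyPred (div_mem_fareySet hkm hmn) hlt
  have hbelow : c < q j₁ := hc j₁ ▸ fareyPred_lt hn (hq0 j₁)
  linarith

lemma Nat.Prime.natCast_div_ne {p a b : ℕ} (hp : p.Prime) (ha : 0 < a) (hap : a < p)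
    (hb : 0 < b) (hbp : b < p) (k : ℕ) : (a : ℚ) / p ≠ k / b := by
  intro h
  rw [div_eq_div_iff (by exact_mod_cast hp.ne_zero) (by positivity)] at h
  have hdvd : p ∣ a * b := ⟨k, by exact_mod_cast h.trans (mul_comm _ _)⟩
  rcases hp.dvd_mul.1 hdvd with h | h
  · exact absurd (Nat.le_of_dvd ha h) (by omega)
  · exact absurd (Nat.le_of_dvd hb h) (by omega)

lemma Finset.exists_fin_partition_fibers {α β : Type*} [DecidableEq α] [DecidableEq β]
    (s : Finset α) (f : α → β) :
    ∃ (t : ℕ) (A : Fin t → Finset α), t = #(s.image f) ∧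
      (∀ i j, i ≠ j → Disjoint (A i) (A j)) ∧ univ.biUnion A = s ∧
      ∀ i, ∀ x ∈ A i, ∀ y ∈ A i, f x = f y := by
  let e := (s.image f).equivFin
  refine ⟨_, fun i => s.filter fun x => f x = e.symm i, rfl, ?_, ?_, ?_⟩
  · intro i j hij
    refine disjoint_left.2 fun x hxi hxj => hij (e.symm.injective (Subtype.ext ?_))
    exact (mem_filter.1 hxi).2.symm.trans (mem_filter.1 hxj).2
  · ext x
    simp only [mem_biUnion, mem_univ, true_and, mem_filter]
    refine ⟨fun ⟨_, hx, _⟩ => hx, fun hx => ⟨e ⟨f x, mem_image_of_mem f hx⟩, hx, ?_⟩⟩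
    rw [Equiv.symm_apply_apply]
  · intro i x hx y hy
    exact (mem_filter.1 hx).2.trans (mem_filter.1 hy).2.symm

/-- For prime `p` and `1 ≤ n ≤ p-1`, the set `{1, …, p-1}` can be partitioned into at most
`n(n+1)/2` sets such that for every part and every `m ≤ n`, no `m` (not necessarily
distinct) elements of that part have sum divisible by `p`. -/
theorem stmt2 (p n : ℕ) (hp : p.Prime) (hn1 : 1 ≤ n) (hnp : n ≤ p - 1) :
    ∃ (t : ℕ) (A : Fin t → Finset ℕ),
      t ≤ n * (n + 1) / 2 ∧
      (∀ i j : Fin t, i ≠ j → Disjoint (A i) (A j)) ∧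
      (Finset.univ.biUnion A = Finset.Icc 1 (p - 1)) ∧
      (∀ i : Fin t, ∀ m : ℕ, 1 ≤ m → m ≤ n →
        ∀ g : Fin m → ℕ, (∀ j, g j ∈ A i) → ¬ p ∣ ∑ j, g j) := by
  have hp0 : (0 : ℚ) < p := by exact_mod_cast hp.pos
  have hpos : ∀ {x}, x ∈ Icc 1 (p - 1) → (0 : ℚ) < x / p := fun hx =>
    div_pos (by exact_mod_cast (mem_Icc.1 hx).1) hp0
  obtain ⟨t, A, ht, hdisj, hunion, hfiber⟩ :=
    (Icc 1 (p - 1)).exists_fin_partition_fibers fun x : ℕ => fareyPred n (x / p)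
  refine ⟨t, A, ?_, hdisj, hunion, ?_⟩
  · refine ht ▸ (card_le_card ?_).trans (card_fareySet_le n)
    exact image_subset_iff.2 fun x hx => fareyPred_mem hn1 (hpos hx)
  intro i m hm hmn g hg ⟨k, hk⟩
  have hIcc : ∀ j, g j ∈ Icc 1 (p - 1) := fun j => hunion ▸ mem_biUnion.2 ⟨i, mem_univ _, hg j⟩
  have hlt : ∀ j, g j < p := fun j => by have := mem_Icc.1 (hIcc j); omega
  have hsum : ∑ j, (g j : ℚ) / p = k := by
    rw [← sum_div, ← Nat.cast_sum, hk, Nat.cast_mul, mul_div_cancel_left₀ _ hp0.ne']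
  obtain ⟨j, hj⟩ := exists_eq_mean_of_fareyPred_eq hn1 hm hmn (fun j => hpos (hIcc j))
    (fun j => (div_lt_one hp0).2 (by exact_mod_cast hlt j))
    (fun j => hfiber i _ (hg j) _ (hg ⟨0, hm⟩)) hsum
  exact hp.natCast_div_ne (mem_Icc.1 (hIcc j)).1 (hlt j) hm (by omega) k hj
end

section
/- Suppose that for every prime p there exists a finite graph G'_p with clique number at most p and chromatic number at least g(p), where g(p) = max{ f(n) : p ≤ n < nextPrime(p) } for a given function f : ℕ → ℕ, and suppose moreover that every induced subgraph of G'_p with clique number n < p has chromatic number at most n^(n²). Then the hereditary class C consisting of all induced subgraphs of the graphs G'_p is χ-bounded, and for every integer n ≥ 2 contains a graph G with ω(G) ≤ n and χ(G) ≥ f(n). -/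
/-!
Let `H` be an induced subgraph of `G'_p` with `ω(H) = n`. If `n < p`, then `χ(H) ≤ n ^ n²` by
hypothesis; otherwise `χ(H) ≤ χ(G'_p)` with `p ≤ n` prime, one of finitely many values. For the
lower bound take `p` the largest prime `≤ n`: then `p ≤ n < nextPrime p`, so
`f n ≤ g p ≤ χ(G'_p)` while `ω(G'_p) ≤ p ≤ n`.
-/

/-- A class of finite graphs is hereditary if it is closed under induced subgraphs. -/
def Hereditary (C : Set (Σ n : ℕ, SimpleGraph (Fin n))) : Prop :=
  ∀ G ∈ C, ∀ (m : ℕ) (e : Fin m ↪ Fin G.1), (⟨m, G.2.comap e⟩ : Σ n, SimpleGraph (Fin n)) ∈ C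

/-- A class of finite graphs is χ-bounded if some function bounds the chromatic number in
terms of the clique number. -/
def ChiBounded (C : Set (Σ n : ℕ, SimpleGraph (Fin n))) : Prop :=
  ∃ F : ℕ → ℕ, ∀ G ∈ C, G.2.chromaticNumber ≤ (F G.2.cliqueNum : ℕ∞)

/-- The smallest prime strictly greater than `p`. -/
noncomputable def nextPrime (p : ℕ) : ℕ := Nat.find (Nat.exists_infinite_primes (p + 1))

/-- `g p = max { f n : p ≤ n < nextPrime p }`. -/
noncomputable def gfun (f : ℕ → ℕ) (p : ℕ) : ℕ := (Finset.Ico p (nextPrime p)).sup f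

theorem lt_nextPrime_findGreatest_prime (n : ℕ) :
    n < nextPrime (Nat.findGreatest Nat.Prime n) := by
  by_contra! h
  have hnext := Nat.find_spec (Nat.exists_infinite_primes (Nat.findGreatest Nat.Prime n + 1))
  exact Nat.findGreatest_is_greatest hnext.1 h hnext.2

theorem exists_prime_le_lt_nextPrime {n : ℕ} (hn : 2 ≤ n) :
    ∃ p, p.Prime ∧ p ≤ n ∧ n < nextPrime p :=
  ⟨_, Nat.findGreatest_spec hn Nat.prime_two, Nat.findGreatest_le n,
    lt_nextPrime_findGreatest_prime n⟩

theorem le_gfun (f : ℕ → ℕ) {p n : ℕ} (hpn : p ≤ n) (hn : n < nextPrime p) :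
    f n ≤ gfun f p :=
  Finset.le_sup (Finset.mem_Ico.mpr ⟨hpn, hn⟩)

namespace SimpleGraph

theorem chromaticNumber_comap_le {V W : Type*} (G : SimpleGraph W) (f : V → W) :
    (G.comap f).chromaticNumber ≤ G.chromaticNumber :=
  chromaticNumber_mono_of_hom (Hom.comap f G)

theorem coe_chromaticNumber_toNat {V : Type*} [Fintype V] (G : SimpleGraph V) :
    (G.chromaticNumber.toNat : ℕ∞) = G.chromaticNumber :=
  ENat.natCast_toNat (chromaticNumber_ne_top_iff_exists.mpr ⟨_, G.colorable_of_fintype⟩)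

end SimpleGraph

open SimpleGraph

noncomputable def chiBound (Gp : ℕ → Σ n : ℕ, SimpleGraph (Fin n)) (n : ℕ) : ℕ :=
  max (n ^ (n ^ 2)) (((Finset.range (n + 1)).filter Nat.Prime).sup
    fun q => (Gp q).2.chromaticNumber.toNat)

theorem chromaticNumber_le_chiBound (Gp : ℕ → Σ n : ℕ, SimpleGraph (Fin n)) {p n : ℕ}
    (hp : p.Prime) (hpn : p ≤ n) : (Gp p).2.chromaticNumber ≤ chiBound Gp n := by
  have hmem : p ∈ (Finset.range (n + 1)).filter Nat.Prime :=
    Finset.mem_filter.mpr ⟨Finset.mem_range_succ_iff.mpr hpn, hp⟩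
  rw [← coe_chromaticNumber_toNat]
  exact Nat.cast_le.mpr <|
    (Finset.le_sup (f := fun q => (Gp q).2.chromaticNumber.toNat) hmem).trans (le_max_right _ _)

/-- If for every prime `p` there is a graph `G'_p` with clique number at most `p`,
chromatic number at least `g(p)`, and all of whose induced subgraphs with clique number
`n < p` have chromatic number at most `n^(n²)`, then the class of all induced subgraphs of
the `G'_p` is χ-bounded and contains, for every `n ≥ 2`, a graph with clique number at
most `n` and chromatic number at least `f(n)`. -/
theorem stmt12 (f : ℕ → ℕ) (Gp : ℕ → Σ n : ℕ, SimpleGraph (Fin n))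
    (hω : ∀ p : ℕ, p.Prime → (Gp p).2.cliqueNum ≤ p)
    (hχ : ∀ p : ℕ, p.Prime → (gfun f p : ℕ∞) ≤ (Gp p).2.chromaticNumber)
    (hind : ∀ p : ℕ, p.Prime → ∀ (m : ℕ) (e : Fin m ↪ Fin (Gp p).1) (n : ℕ),
      ((Gp p).2.comap e).cliqueNum = n → n < p →
      ((Gp p).2.comap e).chromaticNumber ≤ (n ^ (n ^ 2) : ℕ)) :
    ChiBounded {G : Σ n : ℕ, SimpleGraph (Fin n) |
        ∃ p : ℕ, p.Prime ∧ ∃ e : Fin G.1 ↪ Fin (Gp p).1, G.2 = (Gp p).2.comap e} ∧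
    ∀ n : ℕ, 2 ≤ n →
      ∃ G ∈ {G : Σ n : ℕ, SimpleGraph (Fin n) |
          ∃ p : ℕ, p.Prime ∧ ∃ e : Fin G.1 ↪ Fin (Gp p).1, G.2 = (Gp p).2.comap e},
        G.2.cliqueNum ≤ n ∧ (f n : ℕ∞) ≤ G.2.chromaticNumber := by
  refine ⟨⟨chiBound Gp, ?_⟩, fun n hn => ?_⟩
  · rintro G ⟨p, hp, e, hG⟩
    rw [hG]
    rcases lt_or_ge ((Gp p).2.comap e).cliqueNum p with hlt | hle
    · exact (hind p hp G.1 e _ rfl hlt).trans (Nat.cast_le.mpr (le_max_left _ _))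
    · exact ((Gp p).2.chromaticNumber_comap_le e).trans (chromaticNumber_le_chiBound Gp hp hle)
  · obtain ⟨p, hp, hpn, hnp⟩ := exists_prime_le_lt_nextPrime hn
    exact ⟨Gp p, ⟨p, hp, Function.Embedding.refl _, comap_id.symm⟩, (hω p hp).trans hpn,
      (Nat.cast_le.mpr (le_gfun f hpn hnp)).trans (hχ p hp)⟩
end

section
/- For every k ≥ 1 there exists a finite triangle-free graph G_k with chromatic number k admitting an acyclic orientation of its edges such that for every ordered pair of vertices (u,v) there is at most one directed path from u to v. -/
/-- `l` is a directed path from `u` to `v` in the digraph `A`. -/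
def DiPathFrom {V : Type*} (A : V → V → Prop) (l : List V) (u v : V) : Prop :=
  l.Chain' A ∧ l.Nodup ∧ l.head? = some u ∧ l.getLast? = some v

/-!
Zykov's graphs `G₀ = ∅`, `G_{k+1}` = `k` disjoint copies of `G_k` together with one new vertex
for every transversal of the copies, joined to the `k` vertices of that transversal.
A triangle would need two adjacent vertices of one copy adjacent to the same new vertex, but a
new vertex has one neighbour per copy. In a `k`-colouring of `G_{k+1}` every copy uses all `k`
colours (as `χ(G_k) = k`), so choosing in copy `i` a vertex of colour `i` gives a new vertex
that sees every colour; hence `χ(G_{k+1}) = k + 1`.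
Orient each copy as `G_k` and every new edge towards the new vertex. New vertices are sinks, so a
directed path stays in one copy, except that it may end at a new vertex, entered from its unique
neighbour in that copy: cycles and pairs of distinct paths would already occur in `G_k`.
-/

open SimpleGraph Relation Function

section Orientation

variable {V W : Type*}

structure IsAcyclicUniquePathOrientation (G : SimpleGraph V) (A : V → V → Prop) : Prop where
  adj_iff : ∀ u v, G.Adj u v ↔ (A u v ∨ A v u)
  acyclic : ∀ v, ¬ TransGen A v v
  unique_diPath : ∀ u v l₁ l₂, DiPathFrom A l₁ u v → DiPathFrom A l₂ u v → l₁ = l₂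

theorem DiPathFrom.map {A : V → V → Prop} {B : W → W → Prop} {f : V → W} (hf : Injective f)
    (hAB : ∀ x y, A x y → B (f x) (f y)) {l : List V} {u v : V} (h : DiPathFrom A l u v) :
    DiPathFrom B (l.map f) (f u) (f v) := by
  obtain ⟨hc, hn, hu, hv⟩ := h
  refine ⟨(List.isChain_map f).mpr (hc.imp hAB), hn.map hf, ?_, ?_⟩
  · simp [List.head?_map, hu]
  · simp [List.getLast?_map, hv]

namespace IsAcyclicUniquePathOrientation

variable {G : SimpleGraph V} {A : V → V → Prop}

theorem asymm (h : IsAcyclicUniquePathOrientation G A) (u v : V) : ¬ (A u v ∧ A v u) :=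
  fun ⟨huv, hvu⟩ => h.acyclic u (.head huv (.single hvu))

theorem comap (h : IsAcyclicUniquePathOrientation G A) {f : W → V} (hf : Injective f) :
    IsAcyclicUniquePathOrientation (G.comap f) (fun x y => A (f x) (f y)) where
  adj_iff u v := h.adj_iff (f u) (f v)
  acyclic v hv := h.acyclic (f v) (hv.lift f fun _ _ => id)
  unique_diPath _ _ _ _ h₁ h₂ := List.map_injective_iff.mpr hf <|
    h.unique_diPath _ _ _ _ (h₁.map hf fun _ _ => id) (h₂.map hf fun _ _ => id)

theorem of_isEmpty [IsEmpty V] : IsAcyclicUniquePathOrientation G A :=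
  ⟨isEmptyElim, isEmptyElim, isEmptyElim⟩

end IsAcyclicUniquePathOrientation

end Orientation

/-- Zykov's construction: `k` disjoint copies of `V` and, for every transversal `f` choosing the
vertex `f i` in copy `i`, a new vertex `inr f` joined to the `k` vertices of `f`. -/
abbrev Zykov (k : ℕ) (V : Type*) : Type _ := (Fin k × V) ⊕ (Fin k → V)

namespace Zykov

variable {k : ℕ} {V : Type*}

abbrev copy (i : Fin k) (a : V) : Zykov k V := .inl (i, a)

def rel (r : V → V → Prop) : Zykov k V → Zykov k V → Prop
  | .inl (i, u), .inl (j, v) => i = j ∧ r u v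
  | .inl (i, u), .inr f => f i = u
  | .inr _, _ => False

variable {r : V → V → Prop} {i j : Fin k} {a b : V} {f g : Fin k → V}

@[simp] theorem rel_inl_inl : rel r (.inl (i, a)) (.inl (j, b)) ↔ i = j ∧ r a b := .rfl
@[simp] theorem rel_inl_inr : rel r (.inl (i, a)) (.inr f) ↔ f i = a := .rfl
@[simp] theorem not_rel_inr {x : Zykov k V} : ¬ rel r (.inr f) x := by cases x <;> exact id

theorem transGen_rel_inl {x : Zykov k V} (h : TransGen (rel r) x (.inl (j, b))) :
    ∃ a, x = .inl (j, a) ∧ TransGen r a b := by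
  induction h using TransGen.head_induction_on with
  | @single x h =>
    rcases x with ⟨i, a⟩ | f
    · obtain ⟨rfl, h⟩ := h
      exact ⟨a, rfl, .single h⟩
    · exact absurd h not_rel_inr
  | @head x y h _ ih =>
    obtain ⟨c, rfl, hc⟩ := ih
    rcases x with ⟨i, a⟩ | f
    · obtain ⟨rfl, h⟩ := h
      exact ⟨a, rfl, hc.head h⟩
    · exact absurd h not_rel_inr

theorem rel_acyclic (hr : ∀ a, ¬ TransGen r a a) (x : Zykov k V) : ¬ TransGen (rel r) x x := by
  intro hx
  rcases x with ⟨i, a⟩ | f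
  · obtain ⟨a', ha', h⟩ := transGen_rel_inl hx
    cases ha'
    exact hr a h
  · obtain ⟨y, hy, -⟩ := TransGen.head'_iff.mp hx
    exact not_rel_inr hy

theorem exists_of_isChain_rel_cons_copy :
    ∀ (l : List (Zykov k V)) (a : V), (copy i a :: l).IsChain (rel r) →
      ∃ t, (a :: t).IsChain r ∧
        (l = t.map (copy i) ∨ ∃ f, (a :: t).getLast? = some (f i) ∧ l = t.map (copy i) ++ [.inr f])
  | [], a, _ => ⟨[], .singleton a, .inl rfl⟩
  | .inl (j, b) :: l, a, hc => by
    obtain ⟨⟨rfl, hab⟩, hc⟩ := List.isChain_cons_cons.mp hc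
    obtain ⟨t, ht, hl⟩ := exists_of_isChain_rel_cons_copy l b hc
    refine ⟨b :: t, List.isChain_cons_cons.mpr ⟨hab, ht⟩, ?_⟩
    rcases hl with rfl | ⟨f, hf, rfl⟩
    · exact .inl rfl
    · exact .inr ⟨f, by simpa using hf, rfl⟩
  | .inr f :: l, a, hc => by
    obtain ⟨hfa, hc⟩ := List.isChain_cons_cons.mp hc
    obtain rfl : l = [] := by
      rcases l with _ | ⟨x, l⟩
      · rfl
      · exact absurd (List.isChain_cons_cons.mp hc).1 not_rel_inr
    exact ⟨[], .singleton a, .inr ⟨f, by simpa using hfa.symm, rfl⟩⟩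

theorem diPathFrom_rel_copy {l : List (Zykov k V)} {v : Zykov k V}
    (h : DiPathFrom (rel r) l (copy i a) v) :
    ∃ t b, DiPathFrom r t a b ∧
      (v = copy i b ∧ l = t.map (copy i) ∨
        ∃ f, f i = b ∧ v = .inr f ∧ l = t.map (copy i) ++ [.inr f]) := by
  obtain ⟨hc, hn, hu, hv⟩ := h
  obtain ⟨l, rfl⟩ : ∃ l', l = copy i a :: l' := by
    rcases l with _ | ⟨x, l⟩
    · simp at hu
    · exact ⟨l, by simpa using hu⟩
  obtain ⟨t, ht, rfl | ⟨f, hf, rfl⟩⟩ := exists_of_isChain_rel_cons_copy l a hc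
  · change ((a :: t).map (copy i)).getLast? = some v at hv
    rw [List.getLast?_map, Option.map_eq_some_iff] at hv
    obtain ⟨b, hb, rfl⟩ := hv
    exact ⟨a :: t, b, ⟨ht, List.Nodup.of_map (copy i) (l := a :: t) hn, rfl, hb⟩,
      Or.inl ⟨rfl, rfl⟩⟩
  · change ((a :: t).map (copy i) ++ [Sum.inr f]).getLast? = some v at hv
    change ((a :: t).map (copy i) ++ [Sum.inr f]).Nodup at hn
    rw [List.getLast?_concat, Option.some_inj] at hv
    exact ⟨a :: t, f i, ⟨ht, hn.of_append_left.of_map _, rfl, hf⟩,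
      Or.inr ⟨f, rfl, hv.symm, rfl⟩⟩

theorem diPathFrom_rel_inr {l : List (Zykov k V)} {v : Zykov k V}
    (h : DiPathFrom (rel r) l (.inr f) v) : l = [.inr f] := by
  obtain ⟨hc, -, hu, -⟩ := h
  match l, hc, hu with
  | [x], _, hu => simpa using hu
  | x :: y :: l, hc, hu =>
    obtain rfl : x = .inr f := by simpa using hu
    exact absurd (List.isChain_cons_cons.mp hc).1 not_rel_inr

theorem rel_unique_diPath
    (hr : ∀ a b t₁ t₂, DiPathFrom r t₁ a b → DiPathFrom r t₂ a b → t₁ = t₂)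
    (x y : Zykov k V) (l₁ l₂ : List (Zykov k V))
    (h₁ : DiPathFrom (rel r) l₁ x y) (h₂ : DiPathFrom (rel r) l₂ x y) : l₁ = l₂ := by
  rcases x with ⟨i, a⟩ | f
  · obtain ⟨t₁, b₁, hp₁, ⟨rfl, rfl⟩ | ⟨f, rfl, rfl, rfl⟩⟩ := diPathFrom_rel_copy h₁ <;>
      obtain ⟨t₂, b₂, hp₂, ⟨hy, rfl⟩ | ⟨g, rfl, hy, rfl⟩⟩ := diPathFrom_rel_copy h₂ <;>
      simp only [copy, reduceCtorEq, Sum.inl.injEq, Sum.inr.injEq, Prod.mk.injEq, true_and]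
        at hy <;>
      subst hy <;>
      rw [hr _ _ _ _ hp₁ hp₂]
  · rw [diPathFrom_rel_inr h₁, diPathFrom_rel_inr h₂]

variable (k) in
def graph (G : SimpleGraph V) : SimpleGraph (Zykov k V) := fromRel (rel G.Adj)

variable {G : SimpleGraph V}

@[simp] theorem graph_adj_inl_inl :
    (graph k G).Adj (.inl (i, a)) (.inl (j, b)) ↔ i = j ∧ G.Adj a b := by
  simp only [graph, fromRel_adj, rel_inl_inl, ne_eq, Sum.inl.injEq, Prod.mk.injEq]
  constructor
  · rintro ⟨-, ⟨rfl, h⟩ | ⟨rfl, h⟩⟩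
    exacts [⟨rfl, h⟩, ⟨rfl, h.symm⟩]
  · rintro ⟨rfl, h⟩
    exact ⟨fun ⟨_, hab⟩ => G.ne_of_adj h hab, .inl ⟨rfl, h⟩⟩

@[simp] theorem graph_adj_inl_inr : (graph k G).Adj (.inl (i, a)) (.inr f) ↔ f i = a := by
  simp [graph, fromRel_adj]

@[simp] theorem graph_adj_inr_inl : (graph k G).Adj (.inr f) (.inl (i, a)) ↔ f i = a := by
  simp [graph, fromRel_adj]

@[simp] theorem not_graph_adj_inr_inr : ¬ (graph k G).Adj (.inr f) (.inr g) := by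
  simp [graph, fromRel_adj]

theorem graph_adj_iff {A : V → V → Prop} (hA : ∀ u v, G.Adj u v ↔ (A u v ∨ A v u))
    (x y : Zykov k V) : (graph k G).Adj x y ↔ (rel A x y ∨ rel A y x) := by
  rcases x with ⟨i, a⟩ | f <;> rcases y with ⟨j, b⟩ | g <;> simp [hA, eq_comm, and_or_left]

theorem cliqueFree_graph (hG : G.CliqueFree 3) : (graph k G).CliqueFree 3 := by
  classical
  intro s hs
  obtain ⟨x, y, z, hxy, hxz, hyz, rfl⟩ := is3Clique_iff.mp hs
  rcases x with ⟨i, a⟩ | f <;> rcases y with ⟨j, b⟩ | g <;> rcases z with ⟨m, c⟩ | h <;>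
    simp only [graph_adj_inl_inl, graph_adj_inl_inr, graph_adj_inr_inl,
      not_graph_adj_inr_inr] at hxy hxz hyz
  · obtain ⟨rfl, hab⟩ := hxy
    obtain ⟨rfl, hac⟩ := hxz
    exact hG {a, b, c} (is3Clique_iff.mpr ⟨a, b, c, hab, hac, hyz.2, rfl⟩)
  all_goals
    obtain ⟨rfl, hadj⟩ := ‹_ = _ ∧ G.Adj _ _›
    subst_vars
    exact G.irrefl hadj

theorem colorable_graph (hG : G.Colorable k) : (graph k G).Colorable (k + 1) := by
  obtain ⟨c⟩ := hG
  refine ⟨Coloring.mk (Sum.elim (fun p => (c p.2).castSucc) fun _ => Fin.last k) ?_⟩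
  rintro (⟨i, a⟩ | f) (⟨j, b⟩ | g) h
  · exact (Fin.castSucc_injective k).ne (c.valid (graph_adj_inl_inl.mp h).2)
  · exact Fin.castSucc_ne_last _
  · exact (Fin.castSucc_ne_last _).symm
  · exact absurd h not_graph_adj_inr_inr

theorem not_colorable_graph (hG : k ≤ G.chromaticNumber) : ¬ (graph k G).Colorable k := by
  rintro ⟨c⟩
  have hsurj (i : Fin k) : ∃ a, c (.inl (i, a)) = i :=
    le_chromaticNumber_iff_forall_surjective.mp hG
      (Coloring.mk (fun a => c (.inl (i, a))) fun h => c.valid (graph_adj_inl_inl.mpr ⟨rfl, h⟩)) i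
  choose f hf using hsurj
  exact c.valid (graph_adj_inr_inl.mpr rfl) (hf (c (.inr f))).symm

theorem chromaticNumber_graph (hG : G.chromaticNumber = k) :
    (graph k G).chromaticNumber = k + 1 :=
  chromaticNumber_eq_iff_colorable_not_colorable.mpr
    ⟨colorable_graph (chromaticNumber_le_iff_colorable.mp hG.le), not_colorable_graph hG.ge⟩

end Zykov

theorem IsAcyclicUniquePathOrientation.zykov {V : Type*} {G : SimpleGraph V} {A : V → V → Prop}
    (h : IsAcyclicUniquePathOrientation G A) (k : ℕ) :
    IsAcyclicUniquePathOrientation (Zykov.graph k G) (Zykov.rel A) :=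
  ⟨Zykov.graph_adj_iff h.adj_iff, Zykov.rel_acyclic h.acyclic,
    Zykov.rel_unique_diPath h.unique_diPath⟩

theorem exists_cliqueFree_chromaticNumber_eq_acyclicUniquePathOrientation (k : ℕ) :
    ∃ (V : Type) (_ : Fintype V) (G : SimpleGraph V) (A : V → V → Prop),
      G.CliqueFree 3 ∧ G.chromaticNumber = k ∧ IsAcyclicUniquePathOrientation G A := by
  induction k with
  | zero =>
    exact ⟨Empty, inferInstance, ⊥, fun _ _ => False, cliqueFree_bot (by norm_num),
      chromaticNumber_eq_zero_of_isEmpty, .of_isEmpty⟩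
  | succ k ih =>
    obtain ⟨V, _, G, A, hG, hχ, hA⟩ := ih
    exact ⟨Zykov k V, inferInstance, Zykov.graph k G, Zykov.rel A, Zykov.cliqueFree_graph hG,
      mod_cast Zykov.chromaticNumber_graph hχ, hA.zykov k⟩

theorem stmt14_general (k : ℕ) :
    ∃ (N : ℕ) (G : SimpleGraph (Fin N)),
      G.CliqueFree 3 ∧ G.chromaticNumber = (k : ℕ∞) ∧
      ∃ A : Fin N → Fin N → Prop,
        (∀ u v, G.Adj u v ↔ (A u v ∨ A v u)) ∧
        (∀ u v, ¬ (A u v ∧ A v u)) ∧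
        (∀ v, ¬ Relation.TransGen A v v) ∧
        (∀ (u v : Fin N) (l₁ l₂ : List (Fin N)),
          DiPathFrom A l₁ u v → DiPathFrom A l₂ u v → l₁ = l₂) := by
  obtain ⟨V, _, G, A, hG, hχ, hA⟩ :=
    exists_cliqueFree_chromaticNumber_eq_acyclicUniquePathOrientation k
  let e := (Fintype.equivFin V).symm
  have hA' := hA.comap e.injective
  exact ⟨_, G.comap e, hG.comap (Iso.comap e G).isContained,
    (chromaticNumber_congr (Iso.comap e G)).trans hχ, _, hA'.adj_iff, hA'.asymm, hA'.acyclic,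
    hA'.unique_diPath⟩

/-- For every `k ≥ 1` there is a finite triangle-free graph with chromatic number `k`
admitting an acyclic orientation in which any two vertices are joined by at most one
directed path. -/
theorem stmt14 (k : ℕ) (hk : 1 ≤ k) :
    ∃ (N : ℕ) (G : SimpleGraph (Fin N)),
      G.CliqueFree 3 ∧ G.chromaticNumber = (k : ℕ∞) ∧
      ∃ A : Fin N → Fin N → Prop,
        (∀ u v, G.Adj u v ↔ (A u v ∨ A v u)) ∧
        (∀ u v, ¬ (A u v ∧ A v u)) ∧
        (∀ v, ¬ Relation.TransGen A v v) ∧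
        (∀ (u v : Fin N) (l₁ l₂ : List (Fin N)),
          DiPathFrom A l₁ u v → DiPathFrom A l₂ u v → l₁ = l₂) :=
  stmt14_general k
end

section
/- Let p be prime and n < p. In the graph G'_p constructed from a uniquely-path DAG G (edges uv for u < v with d(u,v) ≢ 0 mod p), every clique is a chain in the reachability order ≤, and for any clique {v_0 < v_1 < ... < v_k} the residues d(v_0, v_i) mod p for i = 0,...,k are pairwise distinct. -/
/-- Directed reachability. -/
def Reach {V : Type*} (A : V → V → Prop) (u v : V) : Prop :=
  ∃ l : List V, DiPathFrom A l u v

/-- The graph `G'_p`. -/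
def shiftGraph {V : Type*} (A : V → V → Prop) (d : V → V → ℕ) (p : ℕ) : SimpleGraph V where
  Adj u v := u ≠ v ∧ ((Reach A u v ∧ ¬ p ∣ d u v) ∨ (Reach A v u ∧ ¬ p ∣ d v u))
  symm := by constructor; intro u v h; exact ⟨h.1.symm, h.2.symm⟩
  loopless := by constructor; intro v h; exact h.1 rfl

/-!
Along a directed path every vertex strictly reaches the later ones, so in an acyclic digraph
every `A`-chain is automatically duplicate-free. Hence two paths `u → v → w` concatenate to a
path `u → w`, and path length is additive: `d u w = d u v + d v w`. For `v₀ < vᵢ < vⱼ` in a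
clique, `d(v₀, vⱼ) ≡ d(v₀, vᵢ) (mod p)` would force `p ∣ d(vᵢ, vⱼ)`, which adjacency forbids.
-/

section

variable {V : Type*} {A : V → V → Prop}

theorem List.IsChain.nodup_of_acyclic (hacyc : ∀ x, ¬ Relation.TransGen A x x) {l : List V}
    (hl : l.IsChain A) : l.Nodup :=
  (hl.imp fun _ _ => Relation.TransGen.single).pairwise.imp
    fun {x y} (hxy : Relation.TransGen A x y) (hxy' : x = y) => hacyc y (hxy' ▸ hxy)

theorem DiPathFrom.append (hacyc : ∀ x, ¬ Relation.TransGen A x x) {l₁ l₂ : List V} {u v w : V}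
    (h₁ : DiPathFrom A l₁ u v) (h₂ : DiPathFrom A l₂ v w) :
    DiPathFrom A (l₁ ++ l₂.tail) u w := by
  obtain ⟨hc₁, -, hu₁, hv₁⟩ := h₁
  obtain ⟨hc₂, -, hv₂, hw₂⟩ := h₂
  obtain _ | ⟨_, t⟩ := l₂
  · simp at hv₂
  obtain rfl : _ = v := by simpa using hv₂
  have hc : (l₁ ++ t).IsChain A :=
    List.IsChain.append hc₁ (List.IsChain.tail hc₂) fun x hx y hy => by
      rw [hv₁, Option.mem_some_iff] at hx
      exact hx ▸ List.IsChain.rel_head? hc₂ hy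
  refine ⟨hc, hc.nodup_of_acyclic hacyc, ?_, ?_⟩
  · rwa [List.head?_append_of_ne_nil _ (by rintro rfl; simp at hu₁)]
  · cases t with
    | nil => simpa using hv₁.trans (by simpa using hw₂)
    | cons y t =>
      rwa [List.tail_cons, List.getLast?_append_of_ne_nil _ (List.cons_ne_nil y t),
        ← List.getLast?_cons_cons]

theorem DiPathFrom.reflTransGen {l : List V} {u v : V} (h : DiPathFrom A l u v) :
    Relation.ReflTransGen A u v := by
  obtain ⟨hc, -, hu, hv⟩ := h
  obtain _ | ⟨a, t⟩ := l
  · simp at hu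
  obtain rfl : a = u := by simpa using hu
  exact List.relationReflTransGen_of_exists_isChain_cons t hc
    ((List.getLast_eq_iff_getLast?_eq_some _).2 hv)

theorem Reach.refl (x : V) : Reach A x x :=
  ⟨[x], List.isChain_singleton x, List.nodup_singleton x, rfl, rfl⟩

theorem Reach.antisymm (hacyc : ∀ x, ¬ Relation.TransGen A x x) {u v : V}
    (huv : Reach A u v) (hvu : Reach A v u) : u = v := by
  obtain ⟨l₁, h₁⟩ := huv
  obtain ⟨l₂, h₂⟩ := hvu
  obtain rfl | huv := Relation.reflTransGen_iff_eq_or_transGen.1 h₁.reflTransGen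
  · rfl
  obtain rfl | hvu := Relation.reflTransGen_iff_eq_or_transGen.1 h₂.reflTransGen
  · rfl
  exact (hacyc u (huv.trans hvu)).elim

theorem dist_add_of_reach (hacyc : ∀ x, ¬ Relation.TransGen A x x) {d : V → V → ℕ}
    (hd : ∀ (u v : V) (l : List V), DiPathFrom A l u v → l.length = d u v + 1)
    {u v w : V} (huv : Reach A u v) (hvw : Reach A v w) :
    d u w = d u v + d v w := by
  obtain ⟨l₁, h₁⟩ := huv
  obtain ⟨l₂, h₂⟩ := hvw
  have hlen₁ := hd u v l₁ h₁
  have hlen₂ := hd v w l₂ h₂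
  have hlen := hd u w _ (h₁.append hacyc h₂)
  rw [List.length_append, List.length_tail] at hlen
  omega

section shiftGraph

variable {d : V → V → ℕ} {p : ℕ}

theorem reach_or_reach_of_isClique {s : Set V} (hs : (shiftGraph A d p).IsClique s)
    {u w : V} (hu : u ∈ s) (hw : w ∈ s) : Reach A u w ∨ Reach A w u := by
  obtain rfl | huw := eq_or_ne u w
  · exact .inl (Reach.refl u)
  · exact (hs hu hw huw).2.imp And.left And.left

theorem not_dvd_dist_of_shiftGraph_adj (hacyc : ∀ x, ¬ Relation.TransGen A x x) {u v : V}
    (hadj : (shiftGraph A d p).Adj u v) (huv : Reach A u v) : ¬ p ∣ d u v := by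
  rcases hadj.2 with ⟨-, h⟩ | ⟨hvu, -⟩
  · exact h
  · exact absurd (huv.antisymm hacyc hvu) hadj.1

theorem dist_mod_ne_of_shiftGraph_adj (hacyc : ∀ x, ¬ Relation.TransGen A x x)
    (hd : ∀ (u v : V) (l : List V), DiPathFrom A l u v → l.length = d u v + 1)
    {x u v : V} (hxu : Reach A x u) (huv : Reach A u v) (hadj : (shiftGraph A d p).Adj u v) :
    d x u % p ≠ d x v % p := by
  rw [dist_add_of_reach hacyc hd hxu huv]
  intro h
  exact not_dvd_dist_of_shiftGraph_adj hacyc hadj huv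
    (by simpa using (Nat.modEq_iff_dvd' (Nat.le_add_right _ _)).1 h)

end shiftGraph

end

theorem stmt18_general {V : Type*} (A : V → V → Prop)
    (hacyc : ∀ x : V, ¬ Relation.TransGen A x x)
    (d : V → V → ℕ)
    (hd : ∀ (u v : V) (l : List V), DiPathFrom A l u v → l.length = d u v + 1)
    (p : ℕ)
    (s : Finset V) (hs : (shiftGraph A d p).IsClique ↑s) :
    (∀ u ∈ s, ∀ w ∈ s, Reach A u w ∨ Reach A w u) ∧
    (∀ (k : ℕ) (v : Fin (k + 1) → V), (∀ i, v i ∈ s) →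
      (∀ i j : Fin (k + 1), i < j → Reach A (v i) (v j) ∧ v i ≠ v j) →
      Function.Injective fun i : Fin (k + 1) => d (v 0) (v i) % p) := by
  refine ⟨fun u hu w hw => reach_or_reach_of_isClique hs hu hw, fun k v hvs hv => ?_⟩
  have hreach₀ (i : Fin (k + 1)) : Reach A (v 0) (v i) := by
    obtain h | h := (Fin.zero_le i).eq_or_lt
    · exact h ▸ Reach.refl _
    · exact (hv 0 i h).1
  refine Function.Injective.of_lt_imp_ne fun i j hij => ?_
  exact dist_mod_ne_of_shiftGraph_adj hacyc hd (hreach₀ i) (hv i j hij).1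
    (hs (hvs i) (hvs j) (hv i j hij).2)

/-- In `G'_p`, every clique is a chain of the reachability order, and along any strictly
increasing chain of pairwise adjacent vertices `v_0 < v_1 < ⋯ < v_k` the residues
`d(v_0, v_i) mod p` are pairwise distinct. -/
theorem stmt18 {V : Type*} [Fintype V] (A : V → V → Prop)
    (hacyc : ∀ x : V, ¬ Relation.TransGen A x x)
    (huniq : ∀ (u v : V) (l₁ l₂ : List V),
      DiPathFrom A l₁ u v → DiPathFrom A l₂ u v → l₁ = l₂)
    (d : V → V → ℕ)
    (hd : ∀ (u v : V) (l : List V), DiPathFrom A l u v → l.length = d u v + 1)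
    (p : ℕ) (hp : p.Prime) (n : ℕ) (hnp : n < p)
    (s : Finset V) (hs : (shiftGraph A d p).IsClique ↑s) :
    (∀ u ∈ s, ∀ w ∈ s, Reach A u w ∨ Reach A w u) ∧
    (∀ (k : ℕ) (v : Fin (k + 1) → V), (∀ i, v i ∈ s) →
      (∀ i j : Fin (k + 1), i < j → Reach A (v i) (v j) ∧ v i ≠ v j) →
      Function.Injective fun i : Fin (k + 1) => d (v 0) (v i) % p) :=
  stmt18_general A hacyc d hd p s hs
end
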